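/- Gradient of the Joule energy at strictly positive conductivities: assume b lies in the range of E and let μ ∈ ℝ^m with μ_e > 0 for every e. Let u ∈ ℝ^n be any solution of L[μ] u = b (the vector G u does not depend on the choice of such u). Then the real-valued function F(μ') = sup_{u' ∈ ℝ^n} ( bᵀu' − ½ u'ᵀ L[μ'] u' ), defined on the open positive orthant, is differentiable at μ, and its gradient at μ has entries ∂F/∂μ_e = −(w_e/2) ((G u)_e)² for e = 1,…,m. -/

import Mathlib

/-!
Since `W G = Eᵀ`, we have `E = Gᵀ W` and `L[x] = Gᵀ W Diag(x) G`. For a flow `q` with `E q = b`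
and `z = G v`, the objective `bᵀv − ½ vᵀ L[x] v` equals `∑ₑ wₑ (qₑ zₑ − xₑ zₑ² / 2)`, and
completing the square bounds it by the flow energy `∑ₑ wₑ qₑ² / (2 xₑ)` (Thomson's principle).
The flow `q = μ ⊙ G u` routes `b` because `L[μ] u = b`, so near `μ` the function `F` is squeezed
between the affine function `x ↦ bᵀu − ½ uᵀ L[x] u` and the energy of this fixed flow. The two
bounds agree at `μ` and both have gradient `−(wₑ/2) (G u)ₑ²` there, hence so does `F`.
-/

open Matrix Filter Topology Asymptotics

theorem HasFDerivAt.of_le_of_le {V : Type*} [NormedAddCommGroup V] [NormedSpace ℝ V]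
    {f l g : V → ℝ} {f' : V →L[ℝ] ℝ} {x : V}
    (hl : HasFDerivAt l f' x) (hg : HasFDerivAt g f' x)
    (hlf : ∀ᶠ y in 𝓝 x, l y ≤ f y) (hfg : ∀ᶠ y in 𝓝 x, f y ≤ g y) (hlg : l x = g x) :
    HasFDerivAt f f' x := by
  have hfx : f x = l x := le_antisymm (hlg ▸ hfg.self_of_nhds) hlf.self_of_nhds
  rw [hasFDerivAt_iff_isLittleO, isLittleO_iff]
  intro ε hε
  filter_upwards [isLittleO_iff.1 hl.isLittleO hε, isLittleO_iff.1 hg.isLittleO hε, hlf, hfg]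
    with y hly hgy hlfy hfgy
  rw [Real.norm_eq_abs, abs_le] at hly hgy ⊢
  constructor <;> linarith [hly.1, hgy.2]

theorem mul_sub_mul_sq_div_two_le {K : Type*} [Field K] [LinearOrder K] [IsStrictOrderedRing K]
    {x : K} (hx : 0 < x) (q z : K) :
    q * z - x * z ^ 2 / 2 ≤ q ^ 2 / 2 / x := by
  rw [le_div_iff₀ hx]
  nlinarith [sq_nonneg (q - x * z)]

section Calculus

variable {𝕜 κ : Type*} [NontriviallyNormedField 𝕜] [Fintype κ]

theorem hasFDerivAt_sum_add_mul_apply (a c x : κ → 𝕜) :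
    HasFDerivAt (fun x : κ → 𝕜 => ∑ e, (a e + c e * x e))
      (∑ e, c e • (ContinuousLinearMap.proj e : (κ → 𝕜) →L[𝕜] 𝕜)) x :=
  HasFDerivAt.fun_sum fun e _ => ((hasFDerivAt_apply e x).const_mul (c e)).const_add (a e)

theorem hasFDerivAt_sum_div_apply (a x : κ → 𝕜) (hx : ∀ e, x e ≠ 0) :
    HasFDerivAt (fun x : κ → 𝕜 => ∑ e, a e / x e)
      (∑ e, (-a e / x e ^ 2) • (ContinuousLinearMap.proj e : (κ → 𝕜) →L[𝕜] 𝕜)) x := by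
  refine HasFDerivAt.fun_sum fun e _ => ?_
  have h := ((hasDerivAt_inv (hx e)).const_mul (a e)).comp_hasFDerivAt x
    (hasFDerivAt_apply (𝕜 := 𝕜) e x)
  simpa only [Function.comp_def, ← div_eq_mul_inv, mul_neg, ← neg_div] using h

end Calculus

theorem eq_transpose_mul_diagonal_of_eq_inv_diagonal_mul {ι κ K : Type*} [Fintype κ]
    [DecidableEq κ] [Field K] {E : Matrix ι κ K} {G : Matrix κ ι K} {w : κ → K}
    (hw : ∀ e, w e ≠ 0) (hG : G = (diagonal w)⁻¹ * Eᵀ) : E = Gᵀ * diagonal w := by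
  have hdet : IsUnit (diagonal w).det := by
    rw [← isUnit_iff_isUnit_det, isUnit_diagonal, Pi.isUnit_iff]
    exact fun e => (hw e).isUnit
  rw [hG, transpose_mul, transpose_transpose, transpose_nonsing_inv, diagonal_transpose,
    nonsing_inv_mul_cancel_right _ _ hdet]

section Network

variable {ι κ : Type*} [Fintype ι] [Fintype κ] [DecidableEq κ]

noncomputable def dualObjective (L : Matrix ι ι ℝ) (b v : ι → ℝ) : ℝ :=
  b ⬝ᵥ v - 1 / 2 * (v ⬝ᵥ L *ᵥ v)

noncomputable def jouleEnergy (L : Matrix ι ι ℝ) (b : ι → ℝ) : ℝ :=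
  ⨆ v, dualObjective L b v

theorem dualObjective_transpose_mul_diagonal (G : Matrix κ ι ℝ) (w x q : κ → ℝ) (v : ι → ℝ) :
    dualObjective (Gᵀ * diagonal w * diagonal x * G) ((Gᵀ * diagonal w) *ᵥ q) v
      = ∑ e, w e * (q e * (G *ᵥ v) e - x e * (G *ᵥ v) e ^ 2 / 2) := by
  rw [dualObjective, dotProduct_comm, ← mulVec_mulVec, ← mulVec_mulVec, ← mulVec_mulVec,
    ← mulVec_mulVec, dotProduct_mulVec v Gᵀ, dotProduct_mulVec v Gᵀ, vecMul_transpose]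
  simp only [dotProduct, mulVec_diagonal, Finset.mul_sum, ← Finset.sum_sub_distrib]
  exact Finset.sum_congr rfl fun e _ => by ring

variable {G : Matrix κ ι ℝ} {w x : κ → ℝ}

theorem dualObjective_le_flowEnergy (hw : ∀ e, 0 ≤ w e) (hx : ∀ e, 0 < x e) (q : κ → ℝ)
    (v : ι → ℝ) :
    dualObjective (Gᵀ * diagonal w * diagonal x * G) ((Gᵀ * diagonal w) *ᵥ q) v
      ≤ ∑ e, w e * q e ^ 2 / 2 / x e := by
  rw [dualObjective_transpose_mul_diagonal]
  refine Finset.sum_le_sum fun e _ => ?_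
  calc w e * (q e * (G *ᵥ v) e - x e * (G *ᵥ v) e ^ 2 / 2)
      ≤ w e * (q e ^ 2 / 2 / x e) :=
        mul_le_mul_of_nonneg_left (mul_sub_mul_sq_div_two_le (hx e) _ _) (hw e)
    _ = w e * q e ^ 2 / 2 / x e := by ring

theorem jouleEnergy_le_flowEnergy (hw : ∀ e, 0 ≤ w e) (hx : ∀ e, 0 < x e) (q : κ → ℝ) :
    jouleEnergy (Gᵀ * diagonal w * diagonal x * G) ((Gᵀ * diagonal w) *ᵥ q)
      ≤ ∑ e, w e * q e ^ 2 / 2 / x e :=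
  ciSup_le (dualObjective_le_flowEnergy hw hx q)

theorem dualObjective_le_jouleEnergy (hw : ∀ e, 0 ≤ w e) (hx : ∀ e, 0 < x e) (q : κ → ℝ)
    (v : ι → ℝ) :
    dualObjective (Gᵀ * diagonal w * diagonal x * G) ((Gᵀ * diagonal w) *ᵥ q) v
      ≤ jouleEnergy (Gᵀ * diagonal w * diagonal x * G) ((Gᵀ * diagonal w) *ᵥ q) :=
  le_ciSup ⟨_, Set.forall_mem_range.2 (dualObjective_le_flowEnergy hw hx q)⟩ v

end Network

theorem joule_energy_gradient_general {n m : ℕ}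
    (E : Matrix (Fin n) (Fin m) ℝ) (w : Fin m → ℝ) (hw : ∀ e, 0 < w e)
    (b : Fin n → ℝ)
    (G : Matrix (Fin m) (Fin n) ℝ) (hG : G = (Matrix.diagonal w)⁻¹ * Eᵀ)
    (μ : Fin m → ℝ) (hμ : ∀ e, 0 < μ e)
    (u : Fin n → ℝ) (hu : (E * Matrix.diagonal μ * G).mulVec u = b)
    (F : (Fin m → ℝ) → ℝ)
    (hF : ∀ μ', F μ' = sSup (Set.range fun u' : Fin n → ℝ =>
      b ⬝ᵥ u' - (1/2) * (u' ⬝ᵥ (E * Matrix.diagonal μ' * G).mulVec u'))) :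
    HasFDerivAt F
      (∑ e : Fin m, (-(w e / 2) * (G.mulVec u e)^2) •
        (ContinuousLinearMap.proj e : (Fin m → ℝ) →L[ℝ] ℝ)) μ := by
  obtain rfl := eq_transpose_mul_diagonal_of_eq_inv_diagonal_mul (fun e => (hw e).ne') hG
  obtain rfl : (Gᵀ * diagonal w) *ᵥ (μ * G *ᵥ u) = b := by
    have hdiag : diagonal μ *ᵥ G *ᵥ u = μ * G *ᵥ u := funext (mulVec_diagonal _ _)
    rw [← hu, ← hdiag, mulVec_mulVec, mulVec_mulVec]
  obtain rfl : (fun x => jouleEnergy (Gᵀ * diagonal w * diagonal x * G)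
      ((Gᵀ * diagonal w) *ᵥ (μ * G *ᵥ u))) = F := (funext hF).symm
  have hw₀ : ∀ e, 0 ≤ w e := fun e => (hw e).le
  have hpos : ∀ᶠ x in 𝓝 μ, ∀ e, 0 < x e :=
    eventually_all.2 fun e => (continuous_apply e).continuousAt.eventually (lt_mem_nhds (hμ e))
  refine HasFDerivAt.of_le_of_le (l := fun x => dualObjective (Gᵀ * diagonal w * diagonal x * G)
      ((Gᵀ * diagonal w) *ᵥ (μ * G *ᵥ u)) u)
    (g := fun x => ∑ e, w e * (μ e * (G *ᵥ u) e) ^ 2 / 2 / x e)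
    ?_ ?_ (hpos.mono fun x hx => dualObjective_le_jouleEnergy hw₀ hx _ u)
    (hpos.mono fun x hx => jouleEnergy_le_flowEnergy hw₀ hx _) ?_
  · refine (hasFDerivAt_sum_add_mul_apply (fun e => w e * μ e * (G *ᵥ u) e ^ 2)
      (fun e => -(w e / 2) * (G *ᵥ u) e ^ 2) μ).congr_of_eventuallyEq
      (Eventually.of_forall fun x => ?_)
    dsimp only
    rw [dualObjective_transpose_mul_diagonal]
    exact Finset.sum_congr rfl fun e _ => by simp only [Pi.mul_apply]; ring
  · refine (hasFDerivAt_sum_div_apply _ μ fun e => (hμ e).ne').congr_fderiv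
      (Finset.sum_congr rfl fun e _ => ?_)
    field_simp [(hμ e).ne']
  · rw [dualObjective_transpose_mul_diagonal]
    refine Finset.sum_congr rfl fun e _ => ?_
    simp only [Pi.mul_apply]
    field_simp [(hμ e).ne']
    ring

/-- Gradient of the Joule energy at strictly positive conductivities: if `b` is in the
range of `E`, `μ > 0` componentwise, and `L[μ] u = b`, then
`F(μ') = sup_{u'} (bᵀu' − ½ u'ᵀ L[μ'] u')` is differentiable at `μ` with gradient
entries `∂F/∂μ_e = −(w_e/2) ((G u)_e)²`. Here `G = W⁻¹Eᵀ`, `L[μ] = E Diag(μ) G`. -/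
theorem joule_energy_gradient {n m : ℕ} (hn : 0 < n) (hm : 0 < m)
    (E : Matrix (Fin n) (Fin m) ℝ) (w : Fin m → ℝ) (hw : ∀ e, 0 < w e)
    (b : Fin n → ℝ)
    (G : Matrix (Fin m) (Fin n) ℝ) (hG : G = (Matrix.diagonal w)⁻¹ * Eᵀ)
    (hb : ∃ q₀ : Fin m → ℝ, E.mulVec q₀ = b)
    (μ : Fin m → ℝ) (hμ : ∀ e, 0 < μ e)
    (u : Fin n → ℝ) (hu : (E * Matrix.diagonal μ * G).mulVec u = b)
    (F : (Fin m → ℝ) → ℝ)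
    (hF : ∀ μ', F μ' = sSup (Set.range fun u' : Fin n → ℝ =>
      b ⬝ᵥ u' - (1/2) * (u' ⬝ᵥ (E * Matrix.diagonal μ' * G).mulVec u'))) :
    HasFDerivAt F
      (∑ e : Fin m, (-(w e / 2) * (G.mulVec u e)^2) •
        (ContinuousLinearMap.proj e : (Fin m → ℝ) →L[ℝ] ℝ)) μ :=
  joule_energy_gradient_general E w hw b G hG μ hμ u hu F hF
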